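/- arXiv:2405.02964 — 3 statements merged into one kernel-verified Lean document; each statement's English description precedes it below -/
import Mathlib

section
/- Let n ≥ 3 and let σ : Fin n → {-1,1} be an assignment of signs to the edge correlators of the n-cycle such that the number of i with σ i = -1 is even. Then the behavior with ⟨B_i⟩ = 0 and ⟨B_i B_{i+1}⟩ = σ i for all i is noncontextual: it is a convex combination of deterministic ±1 assignments to B_0,…,B_{n-1}. -/
open Classical

/-- A behavior on the `n`-cycle, given by single-measurement expectations `single i = ⟨B_i⟩`
and edge correlators `edge i = ⟨B_i B_{i+1}⟩` (indices mod `n`), is noncontextual if it is a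
convex combination of deterministic ±1 assignments `ε : Fin n → {-1,1}`. -/
def Noncontextual (n : ℕ) [NeZero n] (single edge : Fin n → ℝ) : Prop :=
  ∃ (m : ℕ) (w : Fin m → ℝ) (ε : Fin m → Fin n → ℝ),
    (∀ j, 0 ≤ w j) ∧ (∑ j, w j) = 1 ∧
    (∀ j i, ε j i = -1 ∨ ε j i = 1) ∧
    (∀ i, (∑ j, w j * ε j i) = single i) ∧
    (∀ i, (∑ j, w j * ε j i * ε j (i + 1)) = edge i)

/-!
Choose vertex signs `f i = σ 0 ⋯ σ (i-1)`, the prefix products of the edge signs. Then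
`f i f (i+1) = σ i` along the path, and the evenness of the number of `-1`s makes the product of
all edge signs `1`, which closes the cycle. The behavior is the uniform mixture of the two
deterministic assignments `f` and `-f`: the single expectations cancel, while both give the edge
correlators `σ`.
-/

open Finset

lemma prod_Iio_add_one_of_prod_eq_one {M : Type*} [CommMonoid M] {n : ℕ} [NeZero n]
    {σ : Fin n → M} (h : ∏ i, σ i = 1) (i : Fin n) :
    ∏ k ∈ Iio (i + 1), σ k = (∏ k ∈ Iio i, σ k) * σ i := by
  obtain ⟨m, rfl⟩ := Nat.exists_eq_succ_of_ne_zero (NeZero.ne n)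
  rw [prod_Iio_mul_eq_prod_Iic]
  induction i using Fin.lastCases with
  | last => rw [Fin.last_add_one, ← bot_eq_zero, Iio_bot, prod_empty, ← Fin.top_eq_last,
      Iic_top, h]
  | cast j => rw [Fin.coeSucc_eq_succ]; rfl

lemma prod_eq_neg_one_pow_card_filter {ι : Type*} [Fintype ι] {σ : ι → ℝ}
    (hσ : ∀ i, σ i = -1 ∨ σ i = 1) :
    ∏ i, σ i = (-1) ^ #{i | σ i = -1} := by
  calc ∏ i, σ i = ∏ i, if σ i = -1 then -1 else 1 :=
        prod_congr rfl fun i _ => by rcases hσ i with h | h <;> simp [h]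
    _ = (-1) ^ #{i | σ i = -1} := by rw [prod_ite]; simp

lemma mul_self_prod_eq_one {ι : Type*} {s : Finset ι} {σ : ι → ℝ}
    (hσ : ∀ i, σ i = -1 ∨ σ i = 1) : (∏ i ∈ s, σ i) * ∏ i ∈ s, σ i = 1 := by
  rw [← prod_mul_distrib]
  exact prod_eq_one fun i _ => by rcases hσ i with h | h <;> simp [h]

lemma exists_sign_mul_succ_eq {n : ℕ} [NeZero n] {σ : Fin n → ℝ}
    (hσ : ∀ i, σ i = -1 ∨ σ i = 1) (hprod : ∏ i, σ i = 1) :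
    ∃ f : Fin n → ℝ, (∀ i, f i = -1 ∨ f i = 1) ∧ ∀ i, f i * f (i + 1) = σ i := by
  refine ⟨fun i => ∏ k ∈ Iio i, σ k, fun i => ?_, fun i => ?_⟩
  · exact (mul_self_eq_one_iff.mp (mul_self_prod_eq_one hσ)).symm
  · dsimp only
    rw [prod_Iio_add_one_of_prod_eq_one hprod, ← mul_assoc, mul_self_prod_eq_one hσ, one_mul]

lemma noncontextual_zero_mul_succ {n : ℕ} [NeZero n] {f : Fin n → ℝ}
    (hf : ∀ i, f i = -1 ∨ f i = 1) :
    Noncontextual n (fun _ => 0) fun i => f i * f (i + 1) := by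
  refine ⟨2, ![1 / 2, 1 / 2], ![f, -f], ?_, ?_, ?_, ?_, ?_⟩
  · intro j; fin_cases j <;> norm_num
  · norm_num
  · intro j i
    fin_cases j <;> rcases hf i with h | h <;> simp [h]
  · intro i; simp [Fin.sum_univ_two]
  · intro i
    simp only [Fin.sum_univ_two, Matrix.cons_val_zero, Matrix.cons_val_one, Pi.neg_apply,
      mul_neg, neg_mul, neg_neg]
    ring

theorem even_sign_edge_behavior_noncontextual_general
    (n : ℕ) [NeZero n] (σ : Fin n → ℝ)
    (hσ : ∀ i, σ i = -1 ∨ σ i = 1)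
    (heven : Even (Finset.univ.filter fun i => σ i = -1).card) :
    Noncontextual n (fun _ => 0) σ := by
  have hprod : ∏ i, σ i = 1 := by
    rw [prod_eq_neg_one_pow_card_filter hσ, heven.neg_one_pow]
  obtain ⟨f, hf, hedge⟩ := exists_sign_mul_succ_eq hσ hprod
  simpa only [hedge] using noncontextual_zero_mul_succ hf

/-- If `σ : Fin n → {-1,1}` assigns signs to the edge correlators of the `n`-cycle with an
even number of `-1`s, then the behavior with `⟨B_i⟩ = 0` and `⟨B_i B_{i+1}⟩ = σ i` is
noncontextual. -/
theorem even_sign_edge_behavior_noncontextual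
    (n : ℕ) [NeZero n] (hn : 3 ≤ n) (σ : Fin n → ℝ)
    (hσ : ∀ i, σ i = -1 ∨ σ i = 1)
    (heven : Even (Finset.univ.filter fun i => σ i = -1).card) :
    Noncontextual n (fun _ => 0) σ :=
  even_sign_edge_behavior_noncontextual_general n σ hσ heven
end

section
/- In the n-cycle scenario (n ≥ 3), every noncontextual behavior satisfies all inequalities of the form ∑_{i=0}^{n-1} γ_i ⟨B_i B_{i+1}⟩ ≤ n - 2, where γ_i ∈ {-1,1} and ∏_i γ_i = -1. -/
lemma sign_sum_le (n : ℕ) (t : Fin n → ℝ) (ht : ∀ i, t i = -1 ∨ t i = 1)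
    (hp : (∏ i, t i) = -1) : (∑ i, t i) ≤ (n : ℝ) - 2 := by
  obtain ⟨k, hk⟩ : ∃ k, t k = -1 := by
    by_contra h
    push_neg at h
    have h1 : ∀ i, t i = 1 := fun i => (ht i).resolve_left (h i)
    rw [Finset.prod_congr rfl (fun i _ => h1 i)] at hp
    simp at hp
    linarith
  have := Finset.add_sum_erase Finset.univ t (Finset.mem_univ k)
  rw [← this, hk]
  have hb : (∑ i ∈ Finset.univ.erase k, t i) ≤ ∑ _i ∈ Finset.univ.erase k, (1:ℝ) := by
    apply Finset.sum_le_sum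
    intro i _
    rcases ht i with h | h <;> simp [h]
  rw [Finset.sum_const, Finset.card_erase_of_mem (Finset.mem_univ k), Finset.card_univ,
    Fintype.card_fin, nsmul_eq_mul] at hb
  have hn1 : (1:ℕ) ≤ n := Nat.one_le_iff_ne_zero.mpr (by
    rintro rfl; exact absurd hk (Fin.elim0 k))
  push_cast [hn1] at hb
  linarith

/-- In the `n`-cycle scenario, every noncontextual behavior (whose edge correlators
`edge i = ⟨B_i B_{i+1}⟩` are a convex combination of deterministic ±1 assignments)
satisfies all inequalities `∑ i, γ i * ⟨B_i B_{i+1}⟩ ≤ n - 2` where `γ i = ±1` and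
`∏ i, γ i = -1`. -/
theorem noncontextual_satisfies_cycle_inequalities
    (n : ℕ) [NeZero n] (hn : 3 ≤ n) (edge : Fin n → ℝ)
    (hNC : ∃ (m : ℕ) (w : Fin m → ℝ) (ε : Fin m → Fin n → ℝ),
      (∀ j, 0 ≤ w j) ∧ (∑ j, w j) = 1 ∧
      (∀ j i, ε j i = -1 ∨ ε j i = 1) ∧
      (∀ i, (∑ j, w j * ε j i * ε j (i + 1)) = edge i))
    (γ : Fin n → ℝ) (hγ : ∀ i, γ i = -1 ∨ γ i = 1)
    (hprod : (∏ i, γ i) = -1) :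
    (∑ i, γ i * edge i) ≤ (n : ℝ) - 2 := by
  obtain ⟨m, w, ε, hw, hw1, hε, hedge⟩ := hNC
  -- per-deterministic bound
  have key : ∀ j, (∑ i, γ i * (ε j i * ε j (i+1))) ≤ (n : ℝ) - 2 := by
    intro j
    apply sign_sum_le n (fun i => γ i * (ε j i * ε j (i+1)))
    · intro i
      rcases hγ i with h1 | h1 <;> rcases hε j i with h2 | h2 <;>
        rcases hε j (i+1) with h3 | h3 <;> simp [h1, h2, h3]
    · have hshift : (∏ i, ε j (i+1)) = ∏ i, ε j i :=
        Fintype.prod_equiv (Equiv.addRight 1) _ _ (fun i => rfl)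
      have hsq : ∀ i : Fin n, ε j i * ε j i = 1 := by
        intro i; rcases hε j i with h | h <;> simp [h]
      calc (∏ i, γ i * (ε j i * ε j (i+1)))
          = (∏ i, γ i) * ((∏ i, ε j i) * (∏ i, ε j (i+1))) := by
            rw [Finset.prod_mul_distrib, Finset.prod_mul_distrib]
        _ = -1 := by
            rw [hprod, hshift, ← Finset.prod_mul_distrib,
              Finset.prod_congr rfl (fun i _ => hsq i)]
            simp
  calc (∑ i, γ i * edge i)
      = ∑ i, ∑ j, w j * (γ i * (ε j i * ε j (i+1))) := by
        refine Finset.sum_congr rfl fun i _ => ?_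
        rw [← hedge i, Finset.mul_sum]
        exact Finset.sum_congr rfl fun j _ => by ring
    _ = ∑ j, ∑ i, w j * (γ i * (ε j i * ε j (i+1))) := Finset.sum_comm
    _ = ∑ j, w j * (∑ i, γ i * (ε j i * ε j (i+1))) := by
        simp [Finset.mul_sum]
    _ ≤ ∑ j, w j * ((n : ℝ) - 2) := by
        apply Finset.sum_le_sum
        intro j _
        exact mul_le_mul_of_nonneg_left (key j) (hw j)
    _ = (n : ℝ) - 2 := by rw [← Finset.sum_mul, hw1, one_mul]
end

section
/- In a generalized Bell scenario, if every nonlocal vertex of the NSND polytope has a noncontextual Bob marginal, then for any normalized generalized-Bell inequality S_GBell (S_GBell ≤ 0 on all local behaviors, max over NSND equals 1) and any normalized noncontextuality inequality S_NC on Bob's marginal (S_NC ≤ 0 on noncontextual marginals, max over nondisturbing marginals equals 1), every NSND behavior p satisfies S_GBell(p) + S_NC(p_B) ≤ 1, where p_B is Bob's marginal of p. -/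
/-- Abstract form of the trade-off: let `P` be the convex hull of a finite vertex set, with
vertices partitioned into local and nonlocal ones, `π` the (linear) Bob marginalization and
`N` the convex set of noncontextual Bob behaviors. If the affine functional `SG` (a
normalized generalized-Bell inequality) is `≤ 0` on local vertices and `≤ 1` on `P`, the
affine functional `SN` (a normalized noncontextuality inequality) is `≤ 0` on `N` and
`≤ 1` on marginals of `P`, and every nonlocal vertex has its marginal in `N`, then
`SG p + SN (π p) ≤ 1` for every `p ∈ P`. -/
theorem trade_off_from_nonlocal_vertices_noncontextual
    {V W : Type*} [AddCommGroup V] [Module ℝ V] [AddCommGroup W] [Module ℝ W]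
    (Vert LocalVert : Finset V) (hLV : LocalVert ⊆ Vert)
    (π : V →ₗ[ℝ] W) (N : Set W) (hN : Convex ℝ N)
    (SG : V →ᵃ[ℝ] ℝ) (SN : W →ᵃ[ℝ] ℝ)
    (hSGlocal : ∀ v ∈ LocalVert, SG v ≤ 0)
    (hSGmax : ∀ p ∈ convexHull ℝ (Vert : Set V), SG p ≤ 1)
    (hSNnc : ∀ q ∈ N, SN q ≤ 0)
    (hSNmax : ∀ p ∈ convexHull ℝ (Vert : Set V), SN (π p) ≤ 1)
    (hnonlocal : ∀ v ∈ Vert, v ∉ LocalVert → π v ∈ N) :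
    ∀ p ∈ convexHull ℝ (Vert : Set V), SG p + SN (π p) ≤ 1 := by
  set F : V →ᵃ[ℝ] ℝ := SG + SN.comp π.toAffineMap with hF
  have hconv : Convex ℝ (F ⁻¹' Set.Iic 1) :=
    (convex_Iic (1 : ℝ)).affine_preimage F
  have hsub : (Vert : Set V) ⊆ F ⁻¹' Set.Iic 1 := by
    intro v hv
    have hvh : v ∈ convexHull ℝ (Vert : Set V) := subset_convexHull ℝ _ hv
    have hFv : F v = SG v + SN (π v) := rfl
    simp only [Set.mem_preimage, Set.mem_Iic, hFv]
    by_cases h : v ∈ LocalVert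
    · have := hSGlocal v h
      have := hSNmax v hvh
      linarith
    · have := hSNnc (π v) (hnonlocal v hv h)
      have := hSGmax v hvh
      linarith
  intro p hp
  have := convexHull_min hsub hconv hp
  simpa [hF] using this
end
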